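/- Theorem 2 (δISS of single-layer GRUs): fix λ̌ ≥ 1 and define σ̌_z = σ(‖[W_z λ̌U_z b_z]‖_∞), σ̌_f = σ(‖[W_f λ̌U_f b_f]‖_∞), φ̌_r = tanh(‖[W_r λ̌U_r b_r]‖_∞). Suppose ‖U_r‖_∞ ( (1/4) λ̌ ‖U_f‖_∞ + σ̌_f ) < 1 − (1/4) ((λ̌ + φ̌_r)/(1 − σ̌_z)) ‖U_z‖_∞. Then the GRU is Incrementally Input-to-State Stable: there exist a class-KL function β_Δ and a class-K∞ function γ_Δu such that for every pair of initial states x̄_a, x̄_b with ‖x̄_a‖_∞ ≤ λ̌ and ‖x̄_b‖_∞ ≤ λ̌, every pair of input sequences u_a, u_b with ‖u_a(t)‖_∞ ≤ 1 and ‖u_b(t)‖_∞ ≤ 1 for all t, and every k ≥ 0, the corresponding state trajectories satisfy ‖x_a(k) − x_b(k)‖_∞ ≤ β_Δ(‖x̄_a − x̄_b‖_∞, k) + γ_Δu(sup_t ‖u_a(t) − u_b(t)‖_∞). -/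

import Mathlib

/-!
On the box `‖x‖ ≤ λ̌` (with inputs `‖u‖ ≤ 1`), which the GRU maps into itself, every gate
pre-activation `W u + U x + b` is bounded componentwise by `‖[W λ̌U b]‖_∞`; hence `z ≤ σ̌_z`,
`f ≤ σ̌_f` and `|r| ≤ φ̌_r`. As `σ` is `1/4`-Lipschitz and `tanh` is `1`-Lipschitz, the splitting
`x⁺_a - x⁺_b = z_a (x_a - x_b) + (1 - z_a) (r_a - r_b) + (z_a - z_b) (x_b - r_b)` gives
`‖x⁺_a - x⁺_b‖ ≤ L ‖x_a - x_b‖ + M ‖u_a - u_b‖` with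
`L = σ̌_z + (1 - σ̌_z) ‖U_r‖ (λ̌ ‖U_f‖ / 4 + σ̌_f) + (λ̌ + φ̌_r) ‖U_z‖ / 4`,
and the hypothesis says exactly `L < 1`. Iterating,
`‖x_a(k) - x_b(k)‖ ≤ L^k ‖x̄_a - x̄_b‖ + M sup_t ‖u_a(t) - u_b(t)‖ / (1 - L)`.
-/

open Real Filter

/-- The sigmoid activation function. -/
noncomputable def sigmoid (s : ℝ) : ℝ := 1 / (1 + Real.exp (-s))

/-- Induced infinity norm of a matrix (maximum absolute row sum). -/
noncomputable def matNorm {n m : ℕ} (A : Matrix (Fin n) (Fin m) ℝ) : ℝ :=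
  ⨆ i, ∑ j, |A i j|

/-- Infinity norm of the horizontal concatenation `[A B c]`
(maximum absolute row sum of the concatenated matrix). -/
noncomputable def catNorm {n m p : ℕ} (A : Matrix (Fin n) (Fin m) ℝ)
    (B : Matrix (Fin n) (Fin p) ℝ) (c : Fin n → ℝ) : ℝ :=
  ⨆ i, (∑ j, |A i j| + ∑ j, |B i j| + |c i|)

/-- One step of the single-layer GRU:
`x⁺ = z ∘ x + (1 - z) ∘ tanh(W_r u + U_r (f ∘ x) + b_r)`,
`z = σ(W_z u + U_z x + b_z)`, `f = σ(W_f u + U_f x + b_f)`. -/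
noncomputable def gruStep {nu nx : ℕ}
    (Wz Wf Wr : Matrix (Fin nx) (Fin nu) ℝ)
    (Uz Uf Ur : Matrix (Fin nx) (Fin nx) ℝ)
    (bz bf br : Fin nx → ℝ)
    (u : Fin nu → ℝ) (x : Fin nx → ℝ) : Fin nx → ℝ :=
  let z : Fin nx → ℝ := fun i => _root_.sigmoid ((Wz.mulVec u + Uz.mulVec x + bz) i)
  let f : Fin nx → ℝ := fun i => _root_.sigmoid ((Wf.mulVec u + Uf.mulVec x + bf) i)
  let r : Fin nx → ℝ := fun i => Real.tanh ((Wr.mulVec u + Ur.mulVec (f * x) + br) i)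
  fun j => z j * x j + (1 - z j) * r j

/-- A function `γ : [0,∞) → [0,∞)` is of class K∞ if it is continuous,
strictly increasing, unbounded and `γ 0 = 0`. -/
def IsKInf (γ : ℝ → ℝ) : Prop :=
  ContinuousOn γ (Set.Ici 0) ∧ StrictMonoOn γ (Set.Ici 0) ∧ γ 0 = 0 ∧
    ∀ M : ℝ, ∃ s, 0 ≤ s ∧ M < γ s

/-- A function `β : [0,∞) × ℕ → [0,∞)` is of class KL if `β (·, k)` is of class K∞
for each `k`, `β (s, ·)` is nonincreasing, and `β (s, k) → 0` as `k → ∞`. -/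
def IsKL (β : ℝ → ℕ → ℝ) : Prop :=
  (∀ k : ℕ, IsKInf fun s => β s k) ∧
    (∀ s : ℝ, 0 ≤ s → ∀ k l : ℕ, k ≤ l → β s l ≤ β s k) ∧
    (∀ s : ℝ, 0 ≤ s → Filter.Tendsto (fun k : ℕ => β s k) Filter.atTop (nhds 0))

open Matrix

theorem sigmoid_eq_real_sigmoid : _root_.sigmoid = Real.sigmoid :=
  funext fun _ => one_div _

namespace Real

theorem abs_sigmoid_sub_le (a b : ℝ) : |sigmoid a - sigmoid b| ≤ 1 / 4 * |a - b| := by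
  refine Convex.norm_image_sub_le_of_norm_hasDerivWithin_le
    (fun x _ => (hasDerivAt_sigmoid x).hasDerivWithinAt) (fun x _ => ?_) convex_univ
    (Set.mem_univ b) (Set.mem_univ a)
  rw [norm_eq_abs, abs_of_nonneg (mul_nonneg (sigmoid_nonneg x) (sub_nonneg.2 (sigmoid_le_one x)))]
  nlinarith [sq_nonneg (sigmoid x - 1 / 2)]

theorem tanh_eq_two_mul_sigmoid_sub_one (x : ℝ) : tanh x = 2 * sigmoid (2 * x) - 1 := by
  have h : exp (-(2 * x)) = exp (-x) ^ 2 := by rw [← exp_nat_mul]; ring_nf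
  rw [tanh_eq, sigmoid_def, h, exp_neg]
  field_simp
  ring

theorem tanh_monotone : Monotone tanh := fun a b hab => by
  simp only [tanh_eq_two_mul_sigmoid_sub_one]
  linarith [sigmoid_monotone (by linarith : 2 * a ≤ 2 * b)]

theorem tanh_nonneg {x : ℝ} (hx : 0 ≤ x) : 0 ≤ tanh x :=
  tanh_zero ▸ tanh_monotone hx

theorem abs_tanh_sub_le (a b : ℝ) : |tanh a - tanh b| ≤ |a - b| := by
  have h := abs_sigmoid_sub_le (2 * a) (2 * b)
  rw [← mul_sub, abs_mul, abs_two] at h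
  rw [tanh_eq_two_mul_sigmoid_sub_one, tanh_eq_two_mul_sigmoid_sub_one, sub_sub_sub_cancel_right,
    ← mul_sub, abs_mul, abs_two]
  linarith

theorem abs_tanh_le_tanh {x c : ℝ} (h : |x| ≤ c) : |tanh x| ≤ tanh c := by
  have hneg := tanh_monotone (neg_le_of_abs_le h)
  rw [tanh_neg] at hneg
  exact abs_le.2 ⟨by linarith, tanh_monotone (le_of_abs_le h)⟩

end Real

theorem abs_mulVec_apply_le {ι κ : Type*} [Fintype κ] (A : Matrix ι κ ℝ) (v : κ → ℝ) (i : ι) :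
    |(A *ᵥ v) i| ≤ (∑ j, |A i j|) * ‖v‖ := by
  rw [Matrix.mulVec, dotProduct, Finset.sum_mul]
  refine (Finset.abs_sum_le_sum_abs _ _).trans (Finset.sum_le_sum fun j _ => ?_)
  rw [abs_mul]
  exact mul_le_mul_of_nonneg_left (norm_le_pi_norm v j) (abs_nonneg _)

theorem norm_mul_sub_mul_le {R : Type*} [NonUnitalSeminormedRing R] (f g x y : R) :
    ‖f * x - g * y‖ ≤ ‖f‖ * ‖x - y‖ + ‖f - g‖ * ‖y‖ := by
  rw [show f * x - g * y = f * (x - y) + (f - g) * y by noncomm_ring]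
  exact (norm_add_le _ _).trans (add_le_add (norm_mul_le _ _) (norm_mul_le _ _))

section MatrixNorms

variable {n m p : ℕ}

theorem matNorm_nonneg (A : Matrix (Fin n) (Fin m) ℝ) : 0 ≤ matNorm A :=
  Real.iSup_nonneg fun _ => Finset.sum_nonneg fun _ _ => abs_nonneg _

theorem catNorm_nonneg (A : Matrix (Fin n) (Fin m) ℝ) (B : Matrix (Fin n) (Fin p) ℝ)
    (c : Fin n → ℝ) : 0 ≤ catNorm A B c :=
  Real.iSup_nonneg fun _ => by positivity

theorem sum_abs_le_matNorm (A : Matrix (Fin n) (Fin m) ℝ) (i : Fin n) :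
    ∑ j, |A i j| ≤ matNorm A :=
  le_ciSup (f := fun i => ∑ j, |A i j|) (Set.finite_range _).bddAbove i

theorem sum_abs_add_sum_abs_add_abs_le_catNorm (A : Matrix (Fin n) (Fin m) ℝ)
    (B : Matrix (Fin n) (Fin p) ℝ) (c : Fin n → ℝ) (i : Fin n) :
    ∑ j, |A i j| + ∑ j, |B i j| + |c i| ≤ catNorm A B c :=
  le_ciSup (f := fun i => ∑ j, |A i j| + ∑ j, |B i j| + |c i|) (Set.finite_range _).bddAbove i

theorem abs_mulVec_apply_le_matNorm (A : Matrix (Fin n) (Fin m) ℝ) (v : Fin m → ℝ) (i : Fin n) :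
    |(A *ᵥ v) i| ≤ matNorm A * ‖v‖ :=
  (abs_mulVec_apply_le A v i).trans
    (mul_le_mul_of_nonneg_right (sum_abs_le_matNorm A i) (norm_nonneg v))

variable (W : Matrix (Fin n) (Fin m) ℝ) (U : Matrix (Fin n) (Fin p) ℝ) (b : Fin n → ℝ)
  {lam : ℝ} {u v : Fin m → ℝ} {x y : Fin p → ℝ}

theorem abs_affine_apply_le_catNorm (hlam : 0 ≤ lam) (hu : ‖u‖ ≤ 1) (hx : ‖x‖ ≤ lam) (i : Fin n) :
    |(W *ᵥ u + U *ᵥ x + b) i| ≤ catNorm W (lam • U) b := by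
  have hW : |(W *ᵥ u) i| ≤ ∑ j, |W i j| :=
    (abs_mulVec_apply_le W u i).trans (mul_le_of_le_one_right (by positivity) hu)
  have hU : |(U *ᵥ x) i| ≤ ∑ j, |(lam • U) i j| := by
    simp only [Matrix.smul_apply, smul_eq_mul, abs_mul, abs_of_nonneg hlam, ← Finset.mul_sum]
    exact (abs_mulVec_apply_le U x i).trans
      (by rw [mul_comm]; exact mul_le_mul_of_nonneg_right hx (by positivity))
  calc |(W *ᵥ u + U *ᵥ x + b) i| ≤ |(W *ᵥ u) i| + |(U *ᵥ x) i| + |b i| := abs_add_three _ _ _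
    _ ≤ catNorm W (lam • U) b :=
      le_trans (by gcongr) (sum_abs_add_sum_abs_add_abs_le_catNorm W (lam • U) b i)

theorem abs_affine_apply_sub_le (i : Fin n) :
    |(W *ᵥ u + U *ᵥ x + b) i - (W *ᵥ v + U *ᵥ y + b) i| ≤
      matNorm W * ‖u - v‖ + matNorm U * ‖x - y‖ := by
  have h : (W *ᵥ u + U *ᵥ x + b) i - (W *ᵥ v + U *ᵥ y + b) i =
      (W *ᵥ (u - v)) i + (U *ᵥ (x - y)) i := by
    simp only [Matrix.mulVec_sub, Pi.add_apply, Pi.sub_apply]; ring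
  rw [h]
  exact (abs_add_le _ _).trans
    (add_le_add (abs_mulVec_apply_le_matNorm W _ i) (abs_mulVec_apply_le_matNorm U _ i))

end MatrixNorms

section Gates

variable {n m p : ℕ} (W : Matrix (Fin n) (Fin m) ℝ) (U : Matrix (Fin n) (Fin p) ℝ)
  (b : Fin n → ℝ) {lam : ℝ} {u v : Fin m → ℝ} {x y : Fin p → ℝ}

noncomputable def gruGate (u : Fin m → ℝ) (x : Fin p → ℝ) : Fin n → ℝ :=
  fun i => Real.sigmoid ((W *ᵥ u + U *ᵥ x + b) i)

theorem norm_gruGate_le (hlam : 0 ≤ lam) (hu : ‖u‖ ≤ 1) (hx : ‖x‖ ≤ lam) :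
    ‖gruGate W U b u x‖ ≤ Real.sigmoid (catNorm W (lam • U) b) := by
  refine (pi_norm_le_iff_of_nonneg (Real.sigmoid_nonneg _)).2 fun i => ?_
  rw [Real.norm_eq_abs, gruGate, abs_of_nonneg (Real.sigmoid_nonneg _)]
  exact Real.sigmoid_monotone
    ((le_abs_self _).trans (abs_affine_apply_le_catNorm W U b hlam hu hx i))

theorem abs_gruGate_sub_le (i : Fin n) :
    |gruGate W U b u x i - gruGate W U b v y i| ≤
      1 / 4 * (matNorm W * ‖u - v‖ + matNorm U * ‖x - y‖) :=
  (Real.abs_sigmoid_sub_le _ _).trans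
    (mul_le_mul_of_nonneg_left (abs_affine_apply_sub_le W U b i) (by norm_num))

theorem norm_gruGate_sub_le :
    ‖gruGate W U b u x - gruGate W U b v y‖ ≤
      1 / 4 * (matNorm W * ‖u - v‖ + matNorm U * ‖x - y‖) :=
  (pi_norm_le_iff_of_nonneg (by have := matNorm_nonneg W; have := matNorm_nonneg U; positivity)).2
    fun i => abs_gruGate_sub_le W U b i

theorem norm_gruGate_mul_le {z : Fin n → ℝ} (hz : ‖z‖ ≤ lam) : ‖gruGate W U b u x * z‖ ≤ lam :=
  (pi_norm_le_iff_of_nonneg ((norm_nonneg z).trans hz)).2 fun i => by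
    rw [Pi.mul_apply, norm_mul, Real.norm_eq_abs, gruGate, abs_of_nonneg (Real.sigmoid_nonneg _)]
    exact (mul_le_of_le_one_left (norm_nonneg _) (Real.sigmoid_le_one _)).trans
      ((norm_le_pi_norm z i).trans hz)

end Gates

theorem abs_gated_sub_le {za zb x y ra rb : ℝ} (h0 : 0 ≤ za) (h1 : za ≤ 1) :
    |(za * x + (1 - za) * ra) - (zb * y + (1 - zb) * rb)| ≤
      za * |x - y| + (1 - za) * |ra - rb| + |za - zb| * (|y| + |rb|) := by
  rw [show za * x + (1 - za) * ra - (zb * y + (1 - zb) * rb) =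
    za * (x - y) + (1 - za) * (ra - rb) + (za - zb) * (y - rb) by ring]
  refine (abs_add_three _ _ _).trans ?_
  rw [abs_mul, abs_mul, abs_mul, abs_of_nonneg h0, abs_of_nonneg (sub_nonneg.2 h1)]
  gcongr
  exact abs_sub _ _

theorem add_mul_add_lt_one {σ a c : ℝ} (hσ : σ < 1) (h : a < 1 - c / (1 - σ)) :
    σ + (1 - σ) * a + c < 1 := by
  have hσ' : 0 < 1 - σ := sub_pos.2 hσ
  have := mul_lt_mul_of_pos_left h hσ'
  rw [mul_sub, mul_one, mul_div_cancel₀ _ hσ'.ne'] at this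
  linarith

theorem mul_add_one_sub_mul_le {z σ a X c : ℝ} (hz0 : 0 ≤ z) (hzσ : z ≤ σ) (ha : a ≤ 1)
    (hX : 0 ≤ X) (hc : 0 ≤ c) : z * X + (1 - z) * (a * X + c) ≤ (σ + (1 - σ) * a) * X + c := by
  nlinarith [mul_nonneg (mul_nonneg (sub_nonneg.2 hzσ) (sub_nonneg.2 ha)) hX, mul_nonneg hz0 hc]

section GRU

variable {nu nx : ℕ} (Wz Wf Wr : Matrix (Fin nx) (Fin nu) ℝ) (Uz Uf Ur : Matrix (Fin nx) (Fin nx) ℝ)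
  (bz bf br : Fin nx → ℝ) {lam : ℝ} {u v : Fin nu → ℝ} {x y : Fin nx → ℝ}

theorem gruStep_apply (u : Fin nu → ℝ) (x : Fin nx → ℝ) (j : Fin nx) :
    gruStep Wz Wf Wr Uz Uf Ur bz bf br u x j =
      gruGate Wz Uz bz u x j * x j + (1 - gruGate Wz Uz bz u x j) *
        Real.tanh ((Wr *ᵥ u + Ur *ᵥ (gruGate Wf Uf bf u x * x) + br) j) := by
  simp only [gruStep, sigmoid_eq_real_sigmoid]
  rfl

theorem norm_gruStep_le (hlam : 1 ≤ lam) (hx : ‖x‖ ≤ lam) :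
    ‖gruStep Wz Wf Wr Uz Uf Ur bz bf br u x‖ ≤ lam := by
  refine (pi_norm_le_iff_of_nonneg (by linarith)).2 fun j => ?_
  rw [gruStep_apply, Real.norm_eq_abs]
  set z := gruGate Wz Uz bz u x j
  have hz0 : 0 ≤ z := Real.sigmoid_nonneg _
  have hz1 : 0 ≤ 1 - z := sub_nonneg.2 (Real.sigmoid_le_one _)
  calc |z * x j + (1 - z) * Real.tanh _| ≤ z * lam + (1 - z) * 1 := by
        refine (abs_add_le _ _).trans ?_
        rw [abs_mul, abs_mul, abs_of_nonneg hz0, abs_of_nonneg hz1]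
        gcongr
        · exact (norm_le_pi_norm x j).trans hx
        · exact (Real.abs_tanh_lt_one _).le
    _ ≤ lam := by nlinarith

theorem abs_gruCandidate_le (hlam : 0 ≤ lam) (hu : ‖u‖ ≤ 1) (hx : ‖x‖ ≤ lam) (i : Fin nx) :
    |Real.tanh ((Wr *ᵥ u + Ur *ᵥ (gruGate Wf Uf bf u x * x) + br) i)| ≤
      Real.tanh (catNorm Wr (lam • Ur) br) :=
  Real.abs_tanh_le_tanh
    (abs_affine_apply_le_catNorm Wr Ur br hlam hu (norm_gruGate_mul_le Wf Uf bf hx) i)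

theorem abs_gruCandidate_sub_le (hlam : 0 ≤ lam) (hu : ‖u‖ ≤ 1) (hx : ‖x‖ ≤ lam)
    (hy : ‖y‖ ≤ lam) (i : Fin nx) :
    |Real.tanh ((Wr *ᵥ u + Ur *ᵥ (gruGate Wf Uf bf u x * x) + br) i) -
        Real.tanh ((Wr *ᵥ v + Ur *ᵥ (gruGate Wf Uf bf v y * y) + br) i)| ≤
      matNorm Ur * (1 / 4 * lam * matNorm Uf + Real.sigmoid (catNorm Wf (lam • Uf) bf)) *
          ‖x - y‖ + (matNorm Wr + 1 / 4 * lam * matNorm Ur * matNorm Wf) * ‖u - v‖ := by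
  have hWf := matNorm_nonneg Wf
  have hUf := matNorm_nonneg Uf
  have hprod : ‖gruGate Wf Uf bf u x * x - gruGate Wf Uf bf v y * y‖ ≤
      Real.sigmoid (catNorm Wf (lam • Uf) bf) * ‖x - y‖ +
        1 / 4 * (matNorm Wf * ‖u - v‖ + matNorm Uf * ‖x - y‖) * lam :=
    (norm_mul_sub_mul_le _ _ _ _).trans <| add_le_add
      (mul_le_mul_of_nonneg_right (norm_gruGate_le Wf Uf bf hlam hu hx) (norm_nonneg _))
      (mul_le_mul (norm_gruGate_sub_le Wf Uf bf) hy (norm_nonneg _) (by positivity))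
  calc _ ≤ matNorm Wr * ‖u - v‖ +
        matNorm Ur * ‖gruGate Wf Uf bf u x * x - gruGate Wf Uf bf v y * y‖ :=
        (Real.abs_tanh_sub_le _ _).trans (abs_affine_apply_sub_le Wr Ur br i)
    _ ≤ matNorm Wr * ‖u - v‖ + matNorm Ur * (Real.sigmoid (catNorm Wf (lam • Uf) bf) * ‖x - y‖ +
        1 / 4 * (matNorm Wf * ‖u - v‖ + matNorm Uf * ‖x - y‖) * lam) := by
        gcongr
        exact matNorm_nonneg Ur
    _ = _ := by ring

theorem norm_gruStep_sub_le (hlam : 0 ≤ lam)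
    (ha : matNorm Ur * (1 / 4 * lam * matNorm Uf + Real.sigmoid (catNorm Wf (lam • Uf) bf)) ≤ 1)
    (hu : ‖u‖ ≤ 1) (hv : ‖v‖ ≤ 1) (hx : ‖x‖ ≤ lam) (hy : ‖y‖ ≤ lam) :
    ‖gruStep Wz Wf Wr Uz Uf Ur bz bf br u x - gruStep Wz Wf Wr Uz Uf Ur bz bf br v y‖ ≤
      (Real.sigmoid (catNorm Wz (lam • Uz) bz) +
          (1 - Real.sigmoid (catNorm Wz (lam • Uz) bz)) *
            (matNorm Ur * (1 / 4 * lam * matNorm Uf + Real.sigmoid (catNorm Wf (lam • Uf) bf))) +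
          1 / 4 * (lam + Real.tanh (catNorm Wr (lam • Ur) br)) * matNorm Uz) * ‖x - y‖ +
        (1 / 4 * (lam + Real.tanh (catNorm Wr (lam • Ur) br)) * matNorm Wz + matNorm Wr +
          1 / 4 * lam * matNorm Ur * matNorm Wf) * ‖u - v‖ := by
  have := matNorm_nonneg Wz; have := matNorm_nonneg Wf; have := matNorm_nonneg Wr
  have := matNorm_nonneg Uz; have := matNorm_nonneg Uf; have := matNorm_nonneg Ur
  have := Real.sigmoid_nonneg (catNorm Wf (lam • Uf) bf)
  have hφr := Real.tanh_nonneg (catNorm_nonneg Wr (lam • Ur) br)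
  set σz := Real.sigmoid (catNorm Wz (lam • Uz) bz)
  set φr := Real.tanh (catNorm Wr (lam • Ur) br)
  have hc : 0 ≤ (matNorm Wr + 1 / 4 * lam * matNorm Ur * matNorm Wf) * ‖u - v‖ := by positivity
  have hrate : 0 ≤ σz + (1 - σz) * (matNorm Ur *
      (1 / 4 * lam * matNorm Uf + Real.sigmoid (catNorm Wf (lam • Uf) bf))) :=
    add_nonneg (Real.sigmoid_nonneg _)
      (mul_nonneg (sub_nonneg.2 (Real.sigmoid_le_one _)) (by positivity))
  refine (pi_norm_le_iff_of_nonneg (by positivity)).2 fun i => ?_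
  rw [Pi.sub_apply, gruStep_apply, gruStep_apply, Real.norm_eq_abs]
  set za := gruGate Wz Uz bz u x i
  have hz0 : 0 ≤ za := Real.sigmoid_nonneg _
  have hz1 : 0 ≤ 1 - za := sub_nonneg.2 (Real.sigmoid_le_one _)
  have hzσ : za ≤ σz :=
    (le_abs_self za).trans ((norm_le_pi_norm _ i).trans (norm_gruGate_le Wz Uz bz hlam hu hx))
  have hxy : |x i - y i| ≤ ‖x - y‖ := norm_le_pi_norm (x - y) i
  have hy' : |y i| ≤ lam := (norm_le_pi_norm y i).trans hy
  have hrb := abs_gruCandidate_le Wf Wr Uf Ur bf br hlam hv hy i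
  have hdr := abs_gruCandidate_sub_le Wf Wr Uf Ur bf br (v := v) hlam hu hx hy i
  have hdz := abs_gruGate_sub_le Wz Uz bz (u := u) (v := v) (x := x) (y := y) i
  calc _ ≤ _ := abs_gated_sub_le hz0 (sub_nonneg.1 hz1)
    _ ≤ za * ‖x - y‖ + (1 - za) * (matNorm Ur *
            (1 / 4 * lam * matNorm Uf + Real.sigmoid (catNorm Wf (lam • Uf) bf)) * ‖x - y‖ +
              (matNorm Wr + 1 / 4 * lam * matNorm Ur * matNorm Wf) * ‖u - v‖) +
          1 / 4 * (matNorm Wz * ‖u - v‖ + matNorm Uz * ‖x - y‖) * (lam + φr) := by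
      gcongr
    _ ≤ _ := by linarith [mul_add_one_sub_mul_le hz0 hzσ ha (norm_nonneg (x - y)) hc]

end GRU

section DeltaISS

theorem isKInf_const_mul {c : ℝ} (hc : 0 < c) : IsKInf fun s => c * s := by
  refine ⟨(continuous_const_mul c).continuousOn, fun _ _ _ _ h => mul_lt_mul_of_pos_left h hc,
    mul_zero c, fun M => ⟨(|M| + 1) / c, by positivity, ?_⟩⟩
  show M < c * ((|M| + 1) / c)
  rw [mul_div_cancel₀ _ hc.ne']
  linarith [le_abs_self M]

theorem isKL_pow_mul {L : ℝ} (hL0 : 0 < L) (hL1 : L < 1) : IsKL fun s k => L ^ k * s :=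
  ⟨fun k => isKInf_const_mul (pow_pos hL0 k),
    fun _ hs _ _ hkl => mul_le_mul_of_nonneg_right (pow_le_pow_of_le_one hL0.le hL1.le hkl) hs,
    fun s _ => by simpa using (tendsto_pow_atTop_nhds_zero_of_lt_one hL0.le hL1).mul_const s⟩

theorem le_pow_mul_add_div_of_le_mul_add {d : ℕ → ℝ} {L c : ℝ} (hL0 : 0 ≤ L) (hL1 : L < 1)
    (hc : 0 ≤ c) (h : ∀ k, d (k + 1) ≤ L * d k + c) : ∀ k, d k ≤ L ^ k * d 0 + c / (1 - L)
  | 0 => by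
    have : 0 ≤ c / (1 - L) := div_nonneg hc (sub_nonneg.2 hL1.le)
    simpa using this
  | k + 1 => by
    have hL : 1 - L ≠ 0 := (sub_pos.2 hL1).ne'
    calc d (k + 1) ≤ L * d k + c := h k
      _ ≤ L * (L ^ k * d 0 + c / (1 - L)) + c := by
        gcongr
        exact le_pow_mul_add_div_of_le_mul_add hL0 hL1 hc h k
      _ = L ^ (k + 1) * d 0 + c / (1 - L) := by
        field_simp
        ring

variable {E I : Type*} (F : I → E → E) {S : Set E} {V : Set I}

theorem trajectory_mem (hS : ∀ u ∈ V, ∀ x ∈ S, F u x ∈ S) {u : ℕ → I} {x : ℕ → E}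
    (hu : ∀ t, u t ∈ V) (hx0 : x 0 ∈ S) (hx : ∀ k, x (k + 1) = F (u k) (x k)) : ∀ k, x k ∈ S
  | 0 => hx0
  | k + 1 => hx k ▸ hS _ (hu k) _ (trajectory_mem hS hu hx0 hx k)

theorem exists_deltaISS_of_incremental_bound [SeminormedAddCommGroup E]
    [SeminormedAddCommGroup I] (hV : Bornology.IsBounded V) {L M : ℝ} (hL : L < 1)
    (hM : 0 ≤ M) (hS : ∀ u ∈ V, ∀ x ∈ S, F u x ∈ S)
    (hF : ∀ u ∈ V, ∀ v ∈ V, ∀ x ∈ S, ∀ y ∈ S, ‖F u x - F v y‖ ≤ L * ‖x - y‖ + M * ‖u - v‖) :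
    ∃ β : ℝ → ℕ → ℝ, ∃ γu : ℝ → ℝ, IsKL β ∧ IsKInf γu ∧
      ∀ xbara xbarb : E, xbara ∈ S → xbarb ∈ S →
        ∀ ua ub : ℕ → I, (∀ t, ua t ∈ V) → (∀ t, ub t ∈ V) →
          ∀ xa xb : ℕ → E, xa 0 = xbara → xb 0 = xbarb →
            (∀ k, xa (k + 1) = F (ua k) (xa k)) →
            (∀ k, xb (k + 1) = F (ub k) (xb k)) →
              ∀ k : ℕ, ‖xa k - xb k‖ ≤ β ‖xbara - xbarb‖ k + γu (⨆ t, ‖ua t - ub t‖) := by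
  -- `L ≤ 0` is allowed, and would make `β (·, k)` vanish for `k ≥ 1`, so raise the rate to `1/2`
  set L' := max L (1 / 2)
  have hL'0 : 0 < L' := lt_max_of_lt_right one_half_pos
  have hL'1 : L' < 1 := max_lt hL one_half_lt_one
  have hgain : 0 < (M + 1) / (1 - L') := div_pos (by linarith) (sub_pos.2 hL'1)
  refine ⟨fun s k => L' ^ k * s, fun s => (M + 1) / (1 - L') * s, isKL_pow_mul hL'0 hL'1,
    isKInf_const_mul hgain, ?_⟩
  rintro _ _ hxa0 hxb0 ua ub hua hub xa xb rfl rfl hxa hxb k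
  obtain ⟨C, hC⟩ := Metric.isBounded_iff.1 hV
  have hdu : ∀ t, ‖ua t - ub t‖ ≤ ⨆ t, ‖ua t - ub t‖ := le_ciSup ⟨C, by
    rintro _ ⟨t, rfl⟩
    exact (dist_eq_norm _ _).symm.trans_le (hC (hua t) (hub t))⟩
  set D := ⨆ t, ‖ua t - ub t‖
  have hD : 0 ≤ D := (norm_nonneg _).trans (hdu 0)
  have hstep (k : ℕ) : ‖xa (k + 1) - xb (k + 1)‖ ≤ L' * ‖xa k - xb k‖ + M * D := by
    rw [hxa, hxb]
    refine (hF _ (hua k) _ (hub k) _ (trajectory_mem F hS hua hxa0 hxa k) _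
      (trajectory_mem F hS hub hxb0 hxb k)).trans ?_
    gcongr
    · exact le_max_left _ _
    · exact hdu k
  calc ‖xa k - xb k‖ ≤ L' ^ k * ‖xa 0 - xb 0‖ + M * D / (1 - L') :=
        le_pow_mul_add_div_of_le_mul_add (d := fun k => ‖xa k - xb k‖) hL'0.le hL'1
          (mul_nonneg hM hD) hstep k
    _ ≤ L' ^ k * ‖xa 0 - xb 0‖ + (M + 1) / (1 - L') * D := by
        rw [mul_div_right_comm]
        gcongr
        linarith

end DeltaISS

/-- **Theorem 2 (δISS of single-layer GRUs).**
With `σ̌_z = σ(‖[W_z λ̌U_z b_z]‖_∞)`, `σ̌_f = σ(‖[W_f λ̌U_f b_f]‖_∞)`,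
`φ̌_r = tanh(‖[W_r λ̌U_r b_r]‖_∞)`, if
`‖U_r‖_∞ ((1/4) λ̌ ‖U_f‖_∞ + σ̌_f) < 1 - (1/4) ((λ̌ + φ̌_r)/(1 - σ̌_z)) ‖U_z‖_∞`
then the GRU is Incrementally Input-to-State Stable on initial states bounded by `λ̌`. -/
theorem gru_deltaISS {nu nx : ℕ}
    (Wz Wf Wr : Matrix (Fin nx) (Fin nu) ℝ)
    (Uz Uf Ur : Matrix (Fin nx) (Fin nx) ℝ)
    (bz bf br : Fin nx → ℝ)
    (lam : ℝ) (hlam : 1 ≤ lam)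
    (hcond : matNorm Ur * ((1 / 4) * lam * matNorm Uf + _root_.sigmoid (catNorm Wf (lam • Uf) bf)) <
      1 - (1 / 4) * ((lam + Real.tanh (catNorm Wr (lam • Ur) br)) /
        (1 - _root_.sigmoid (catNorm Wz (lam • Uz) bz))) * matNorm Uz) :
    ∃ β : ℝ → ℕ → ℝ, ∃ γu : ℝ → ℝ, IsKL β ∧ IsKInf γu ∧
      ∀ xbara xbarb : Fin nx → ℝ, ‖xbara‖ ≤ lam → ‖xbarb‖ ≤ lam →
        ∀ ua ub : ℕ → Fin nu → ℝ, (∀ t, ‖ua t‖ ≤ 1) → (∀ t, ‖ub t‖ ≤ 1) →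
          ∀ xa xb : ℕ → Fin nx → ℝ, xa 0 = xbara → xb 0 = xbarb →
            (∀ k, xa (k + 1) = gruStep Wz Wf Wr Uz Uf Ur bz bf br (ua k) (xa k)) →
            (∀ k, xb (k + 1) = gruStep Wz Wf Wr Uz Uf Ur bz bf br (ub k) (xb k)) →
              ∀ k : ℕ, ‖xa k - xb k‖ ≤ β ‖xbara - xbarb‖ k + γu (⨆ t, ‖ua t - ub t‖) := by
  rw [sigmoid_eq_real_sigmoid] at hcond
  have hlam0 : 0 ≤ lam := zero_le_one.trans hlam
  have hσz := Real.sigmoid_lt_one (catNorm Wz (lam • Uz) bz)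
  have hφr := Real.tanh_nonneg (catNorm_nonneg Wr (lam • Ur) br)
  have := matNorm_nonneg Wz; have := matNorm_nonneg Wr; have := matNorm_nonneg Ur
  have := matNorm_nonneg Wf
  have ha := hcond.le.trans (sub_le_self 1 (mul_nonneg (mul_nonneg (by norm_num)
    (div_nonneg (by linarith) (sub_pos.2 hσz).le)) (matNorm_nonneg Uz)))
  have hrate := add_mul_add_lt_one hσz
    (c := 1 / 4 * (lam + Real.tanh (catNorm Wr (lam • Ur) br)) * matNorm Uz)
    (hcond.trans_eq (by ring))
  have hV : Bornology.IsBounded {u : Fin nu → ℝ | ‖u‖ ≤ 1} :=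
    (Metric.isBounded_closedBall (x := 0) (r := 1)).subset fun u hu => mem_closedBall_zero_iff.2 hu
  refine exists_deltaISS_of_incremental_bound (gruStep Wz Wf Wr Uz Uf Ur bz bf br) hV hrate ?_
    (fun _ _ _ hx => norm_gruStep_le Wz Wf Wr Uz Uf Ur bz bf br hlam hx)
    (fun _ hu _ hv _ hx _ hy => norm_gruStep_sub_le Wz Wf Wr Uz Uf Ur bz bf br hlam0 ha hu hv hx hy)
  positivity
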